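/- Let E be a finite state space and G a generator on E. Then for every t ≥ 0, all entries of exp(tG) are nonnegative: exp(tG)(i,j) ≥ 0 for all i, j ∈ E. Together with the row sums being 1, this makes Π_t = exp(tG) a stochastic matrix for every t ≥ 0. -/

import Mathlib

/-!
Adding a large multiple `c • 1` of the identity makes a matrix `M` with nonnegative off-diagonal
entries entrywise nonnegative, and then every term of the exponential series of `M + c • 1` is
nonnegative. Since `c • 1` is central, `exp M = exp (-c) • exp (M + c • 1)`.
-/

open Matrix Filter Topology

/-- A generator (Q-matrix) on a finite state space: nonnegative off-diagonal
entries and zero row sums. -/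
def IsGenerator {E : Type*} [Fintype E] (G : Matrix E E ℝ) : Prop :=
  (∀ i j, i ≠ j → 0 ≤ G i j) ∧ (∀ i, ∑ j, G i j = 0)

namespace Matrix

variable {E : Type*} [Fintype E] [DecidableEq E]

theorem exp_apply_nonneg {A : Matrix E E ℝ} (hA : ∀ i j, 0 ≤ A i j) (i j : E) :
    0 ≤ NormedSpace.exp A i j := by
  let := Matrix.linftyOpNormedRing (n := E) (α := ℝ)
  let := Matrix.linftyOpNormedAlgebra (n := E) (α := ℝ) (R := ℝ)
  have hsum := NormedSpace.exp_series_hasSum_exp' (𝕂 := ℝ) A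
  have hij := Pi.hasSum.mp (Pi.hasSum.mp hsum i) j
  exact hij.nonneg fun n => mul_nonneg (by positivity) (pow_apply_nonneg hA n i j)

theorem exp_smul_one (c : ℝ) : NormedSpace.exp (c • (1 : Matrix E E ℝ)) = Real.exp c • 1 := by
  let := Matrix.linftyOpNormedRing (n := E) (α := ℝ)
  let := Matrix.linftyOpNormedAlgebra (n := E) (α := ℝ) (R := ℝ)
  rw [← Algebra.algebraMap_eq_smul_one, ← Algebra.algebraMap_eq_smul_one, Real.exp_eq_exp_ℝ]
  exact (NormedSpace.algebraMap_exp_comm c).symm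

theorem exp_apply_nonneg_of_offDiag_nonneg {M : Matrix E E ℝ} (hM : ∀ i j, i ≠ j → 0 ≤ M i j)
    (i j : E) : 0 ≤ NormedSpace.exp M i j := by
  set c := ∑ k, |M k k|
  have hshift : ∀ k l, 0 ≤ (M + c • 1) k l := by
    intro k l
    rcases eq_or_ne k l with rfl | hkl
    · have : |M k k| ≤ c := Finset.single_le_sum (fun l _ => abs_nonneg (M l l)) (Finset.mem_univ k)
      simp only [add_apply, smul_apply, one_apply_eq, smul_eq_mul, mul_one]
      linarith [neg_abs_le (M k k)]
    · simpa [one_apply_ne hkl] using hM k l hkl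
  have hexp : NormedSpace.exp M = Real.exp (-c) • NormedSpace.exp (M + c • 1) := by
    rw [← smul_one_mul, ← exp_smul_one, ← exp_add_of_commute _ _ ((Commute.one_left _).smul_left _),
      neg_smul, neg_add_cancel_comm_assoc]
  rw [hexp, smul_apply, smul_eq_mul]
  exact mul_nonneg (Real.exp_pos _).le (exp_apply_nonneg hshift i j)

end Matrix

/-- For a generator `G` and `t ≥ 0`, all entries of `exp (t • G)` are nonnegative. -/
theorem exp_generator_entries_nonneg {E : Type*} [Fintype E] [DecidableEq E]
    (G : Matrix E E ℝ) (hG : IsGenerator G) :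
    ∀ t : ℝ, 0 ≤ t → ∀ i j : E, 0 ≤ NormedSpace.exp (t • G) i j :=
  fun _ ht => exp_apply_nonneg_of_offDiag_nonneg fun i j hij => smul_nonneg ht (hG.1 i j hij)
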